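/- Let $c_1, \dots, c_s$ be distinct real numbers with Lagrange basis polynomials $\ell_i$ and weights $b_i = \int_0^1 \ell_i(\tau)\,d\tau \neq 0$. Let $S \in \mathbb{R}^{N\times N}$ be skew-symmetric and $H : \mathbb{R}^N \to \mathbb{R}$ continuously differentiable. Let $D : \mathbb{R} \to \mathbb{R}^{N\times N}$ be a continuous diagonal-matrix-valued function and set $Y(t) = \int_{t_0 + h/2}^{t} D(s)\,ds$. Let $\eta : \mathbb{R} \to \mathbb{R}$ be continuous with $\phi(t) = \int_{t_0+h/2}^{t} \eta(s)\,ds$, and assume the energy constraint $H(e^{Y(t)} y) = e^{\phi(t)} H(y)$ holds for all $y \in \mathbb{R}^N$ at $t = t_0$ and $t = t_0 + h$. Suppose $v : \mathbb{R} \to \mathbb{R}^N$ is a polynomial map of degree at most $s$ with $v(t_0) = e^{Y(t_0)} x_0$ satisfying the collocation conditions $\dot{v}(t_0 + c_i h) = \frac{1}{b_i}\int_0^1 \ell_i(\tau)\, S\,\nabla H(v(t_0+\tau h))\,d\tau$, and set $x_1 = e^{-Y(t_0+h)} v(t_0 + h)$. Then $H(x_1) = e^{\phi(t_0) - \phi(t_0+h)}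 H(x_0)$, i.e., the exponential energy-preserving collocation method preserves the exact energy dissipation rate. -/

import Mathlib

/-!
Put `w τ = v (t₀ + τ h)`. Each coordinate of `w'` is a polynomial of degree `< s`, so `w'` is the
Lagrange interpolant of its node values, which the collocation conditions give as
`(h / bᵢ) S uᵢ` with `uᵢ = ∫₀¹ ℓᵢ(σ) ∇H(w σ) dσ`. Hence
`∫₀¹ d/dτ H(w τ) dτ = Σᵢ (h / bᵢ) uᵢ ⬝ S uᵢ = 0` by skew-symmetry of `S`, i.e.
`H (v (t₀ + h)) = H (v t₀)`, and the energy constraint at both ends turns this into the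
dissipation identity.
-/

open Matrix MeasureTheory Polynomial

namespace Matrix

variable {m n : Type*} [Fintype n]

theorem dotProduct_mulVec_self_eq_zero_of_transpose_eq_neg {S : Matrix n n ℝ} (hS : Sᵀ = -S)
    (x : n → ℝ) : x ⬝ᵥ S *ᵥ x = 0 := by
  have : x ⬝ᵥ S *ᵥ x = -(x ⬝ᵥ S *ᵥ x) :=
    calc x ⬝ᵥ S *ᵥ x = Sᵀ *ᵥ x ⬝ᵥ x := by rw [dotProduct_mulVec, mulVec_transpose]
      _ = -(x ⬝ᵥ S *ᵥ x) := by rw [hS, neg_mulVec, neg_dotProduct, dotProduct_comm]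
  linarith

theorem mulVec_intervalIntegral [Fintype m] (S : Matrix m n ℝ) {f : ℝ → n → ℝ} {a b : ℝ}
    (hf : IntervalIntegrable f volume a b) :
    S *ᵥ ∫ x in a..b, f x = ∫ x in a..b, S *ᵥ f x :=
  ((mulVecLin S).toContinuousLinearMap.intervalIntegral_comp_comm hf).symm

theorem intervalIntegral_dotProduct {f : ℝ → n → ℝ} {a b : ℝ}
    (hf : IntervalIntegrable f volume a b) (z : n → ℝ) :
    (∫ x in a..b, f x) ⬝ᵥ z = ∫ x in a..b, f x ⬝ᵥ z :=
  (((dotProductBilin ℝ ℝ).flip z).toContinuousLinearMap.intervalIntegral_comp_comm hf).symm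

theorem diagonal_exp_mulVec_diagonal_exp_neg_mulVec [DecidableEq n] (y x : n → ℝ) :
    diagonal (fun k => Real.exp (y k)) *ᵥ diagonal (fun k => Real.exp (-y k)) *ᵥ x = x := by
  simp [mulVec_mulVec, diagonal_mul_diagonal, ← Real.exp_add]

end Matrix

theorem Lagrange.eval_basis_eq_prod {F ι : Type*} [Field F] [DecidableEq ι] (s : Finset ι)
    (c : ι → F) (i : ι) (x : F) :
    (Lagrange.basis s c i).eval x = ∏ j ∈ s.erase i, (x - c j) / (c i - c j) := by
  simp [Lagrange.basis, Lagrange.basisDivisor, eval_prod, div_eq_mul_inv, mul_comm]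

section PolynomialCurve

variable {n : Type*} {v : ℝ → n → ℝ} {m : ℕ}

theorem exists_natDegree_le_eval_comp_affine
    (hv : ∀ k, ∃ p : ℝ[X], p.natDegree ≤ m ∧ ∀ t, v t k = p.eval t) (a b : ℝ) (k : n) :
    ∃ p : ℝ[X], p.natDegree ≤ m ∧ ∀ τ, v (a + τ * b) k = p.eval τ := by
  obtain ⟨p, hp, hpv⟩ := hv k
  refine ⟨p.comp (C b * X + C a), ?_, fun τ => ?_⟩
  calc (p.comp (C b * X + C a)).natDegree ≤ p.natDegree * (C b * X + C a).natDegree :=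
        natDegree_comp_le
    _ ≤ m * 1 := Nat.mul_le_mul hp natDegree_linear_le
    _ = m := mul_one m
  rw [hpv, eval_comp, eval_add, eval_mul, eval_C, eval_C, eval_X]
  ring_nf

theorem hasDerivAt_sum_lagrange_basis_of_natDegree_le {ι : Type*} [Fintype ι] [DecidableEq ι]
    {c : ι → ℝ} (hc : Function.Injective c)
    (hv : ∀ k, ∃ p : ℝ[X], p.natDegree ≤ Fintype.card ι ∧ ∀ t, v t k = p.eval t)
    {v' : ι → n → ℝ} (hv' : ∀ i, HasDerivAt v (v' i) (c i)) (τ : ℝ) :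
    HasDerivAt v (∑ i, (Lagrange.basis Finset.univ c i).eval τ • v' i) τ := by
  refine hasDerivAt_pi.2 fun k => ?_
  obtain ⟨p, hp, hpv⟩ := hv k
  have hvk : (fun t => v t k) = fun t => p.eval t := funext hpv
  have hnode : ∀ i, v' i k = p.derivative.eval (c i) := fun i =>
    (hasDerivAt_pi.1 (hv' i) k).unique (hvk ▸ p.hasDerivAt (c i))
  have hdeg : p.derivative.degree < (Finset.univ : Finset ι).card := by
    by_cases hp0 : p = 0
    · simp [hp0]
    · refine (degree_derivative_lt hp0).trans_le (degree_le_natDegree.trans ?_)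
      simpa using hp
  have hinterp := congrArg (eval τ) (Lagrange.eq_interpolate hc.injOn hdeg)
  rw [Lagrange.interpolate_apply, eval_finsetSum] at hinterp
  simpa [hvk, hnode, hinterp, mul_comm] using p.hasDerivAt τ

end PolynomialCurve

section Energy

variable {n : Type*} [Fintype n] {H : (n → ℝ) → ℝ} {gradH : (n → ℝ) → n → ℝ}

theorem continuous_of_fderiv_apply_eq_dotProduct [DecidableEq n] (hH : ContDiff ℝ 1 H)
    (hgradH : ∀ y w, fderiv ℝ H y w = gradH y ⬝ᵥ w) : Continuous gradH := by
  have hcoord : gradH = fun y k => fderiv ℝ H y (Pi.single k 1) := by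
    ext y k
    simp [hgradH]
  rw [hcoord]
  exact continuous_pi fun k => (hH.continuous_fderiv one_ne_zero).clm_apply continuous_const

theorem HasDerivAt.comp_of_fderiv_apply_eq_dotProduct {w : ℝ → n → ℝ} {w' : n → ℝ} {τ : ℝ}
    (hH : DifferentiableAt ℝ H (w τ)) (hgradH : ∀ y w, fderiv ℝ H y w = gradH y ⬝ᵥ w)
    (hw : HasDerivAt w w' τ) : HasDerivAt (fun σ => H (w σ)) (gradH (w τ) ⬝ᵥ w') τ := by
  have := hH.hasFDerivAt.comp_hasDerivAt τ hw
  rwa [hgradH] at this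

theorem energy_eq_of_hasDerivAt_sum_smul_integral {ι : Type*} [Fintype ι] [DecidableEq n]
    {S : Matrix n n ℝ} (hS : Sᵀ = -S) (hH : ContDiff ℝ 1 H)
    (hgradH : ∀ y w, fderiv ℝ H y w = gradH y ⬝ᵥ w)
    {ℓ : ι → ℝ → ℝ} (hℓ : ∀ i, Continuous (ℓ i)) (a : ι → ℝ) {w : ℝ → n → ℝ}
    (hw : ∀ τ, HasDerivAt w
      (∑ i, ℓ i τ • a i • ∫ σ in (0 : ℝ)..1, ℓ i σ • S *ᵥ gradH (w σ)) τ) :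
    H (w 1) = H (w 0) := by
  have hwc : Continuous w := continuous_iff_continuousAt.2 fun τ => (hw τ).continuousAt
  have hg : Continuous fun σ => gradH (w σ) :=
    (continuous_of_fderiv_apply_eq_dotProduct hH hgradH).comp hwc
  set u : ι → n → ℝ := fun i => ∫ σ in (0 : ℝ)..1, ℓ i σ • gradH (w σ)
  have hℓg : ∀ i, Continuous fun σ => ℓ i σ • gradH (w σ) := fun i => (hℓ i).smul hg
  have hSu : ∀ i, ∫ σ in (0 : ℝ)..1, ℓ i σ • S *ᵥ gradH (w σ) = S *ᵥ u i := fun i => by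
    simp only [u, mulVec_intervalIntegral S ((hℓg i).intervalIntegrable 0 1), mulVec_smul]
  have hderiv : ∀ τ, HasDerivAt (fun σ => H (w σ))
      (∑ i, a i * ((ℓ i τ • gradH (w τ)) ⬝ᵥ S *ᵥ u i)) τ := fun τ => by
    convert (hw τ).comp_of_fderiv_apply_eq_dotProduct (hH.differentiable one_ne_zero _) hgradH
      using 1
    simp only [hSu, dotProduct_sum, dotProduct_smul, smul_dotProduct, smul_eq_mul]
    exact Finset.sum_congr rfl fun i _ => by ring
  have hnode : ∀ i, ∫ τ in (0 : ℝ)..1, a i * ((ℓ i τ • gradH (w τ)) ⬝ᵥ S *ᵥ u i) = 0 :=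
    fun i => by
      rw [intervalIntegral.integral_const_mul,
        ← intervalIntegral_dotProduct ((hℓg i).intervalIntegrable 0 1),
        dotProduct_mulVec_self_eq_zero_of_transpose_eq_neg hS, mul_zero]
  have hFTC := intervalIntegral.integral_eq_sub_of_hasDerivAt (fun τ _ => hderiv τ)
    (Continuous.intervalIntegrable (by fun_prop) 0 1)
  rw [intervalIntegral.integral_finsetSum
    fun i _ => Continuous.intervalIntegrable (by fun_prop) 0 1,
    Finset.sum_eq_zero fun i _ => hnode i] at hFTC
  linarith

end Energy

theorem exponential_energy_preserving_collocation_dissipation_general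
    {N s : ℕ}
    (c : Fin s → ℝ) (hc : Function.Injective c)
    (ℓ : Fin s → ℝ → ℝ)
    (hℓ : ∀ i τ, ℓ i τ = ∏ j ∈ Finset.univ.erase i, (τ - c j) / (c i - c j))
    (b : Fin s → ℝ)
    (S : Matrix (Fin N) (Fin N) ℝ) (hS : Sᵀ = -S)
    (H : (Fin N → ℝ) → ℝ) (gradH : (Fin N → ℝ) → (Fin N → ℝ))
    (hH : ContDiff ℝ 1 H)
    (hgradH : ∀ y w, (fderiv ℝ H y) w = dotProduct (gradH y) w)
    (t₀ h : ℝ)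
    (Y : ℝ → (Fin N → ℝ))
    (φ : ℝ → ℝ)
    (hconstraint : ∀ t ∈ ({t₀, t₀ + h} : Set ℝ), ∀ y : Fin N → ℝ,
      H ((Matrix.diagonal (fun k => Real.exp (Y t k))).mulVec y) = Real.exp (φ t) * H y)
    (x₀ x₁ : Fin N → ℝ)
    (v : ℝ → (Fin N → ℝ))
    (hv : ∀ k, ∃ p : Polynomial ℝ, p.natDegree ≤ s ∧ ∀ t, v t k = p.eval t)
    (hv0 : v t₀ = (Matrix.diagonal (fun k => Real.exp (Y t₀ k))).mulVec x₀)
    (hcoll : ∀ i, HasDerivAt v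
      ((b i)⁻¹ • ∫ τ in (0:ℝ)..1, ℓ i τ • S.mulVec (gradH (v (t₀ + τ * h))))
      (t₀ + c i * h))
    (hx1 : x₁ = (Matrix.diagonal (fun k => Real.exp (-(Y (t₀ + h) k)))).mulVec (v (t₀ + h))) :
    H x₁ = Real.exp (φ t₀ - φ (t₀ + h)) * H x₀ := by
  have hℓ_basis : ∀ i τ, ℓ i τ = (Lagrange.basis Finset.univ c i).eval τ := fun i τ => by
    rw [hℓ, Lagrange.eval_basis_eq_prod]
  have hw_node : ∀ i, HasDerivAt (fun τ => v (t₀ + τ * h))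
      ((h * (b i)⁻¹) • ∫ σ in (0 : ℝ)..1, ℓ i σ • S *ᵥ gradH (v (t₀ + σ * h))) (c i) :=
    fun i => by
      have := (hcoll i).scomp (c i) ((hasDerivAt_mul_const h).const_add t₀)
      rwa [smul_smul] at this
  have hw_poly := exists_natDegree_le_eval_comp_affine hv t₀ h
  rw [← Fintype.card_fin s] at hw_poly
  have hw := hasDerivAt_sum_lagrange_basis_of_natDegree_le hc hw_poly hw_node
  simp_rw [← hℓ_basis] at hw
  have henergy := energy_eq_of_hasDerivAt_sum_smul_integral hS hH hgradH
    (fun i => by simpa only [funext (hℓ_basis i)] using (Lagrange.basis _ c i).continuous) _ hw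
  simp only [one_mul, zero_mul, add_zero] at henergy
  have h_start : H (v t₀) = Real.exp (φ t₀) * H x₀ := hv0 ▸ hconstraint t₀ (by simp) x₀
  have h_end : H (v (t₀ + h)) = Real.exp (φ (t₀ + h)) * H x₁ := by
    simpa only [hx1, diagonal_exp_mulVec_diagonal_exp_neg_mulVec]
      using hconstraint (t₀ + h) (by simp) x₁
  rw [Real.exp_sub, div_mul_eq_mul_div, eq_div_iff (Real.exp_pos _).ne']
  linear_combination henergy + h_start - h_end

/-- The exponential energy-preserving collocation method preserves the exact
energy dissipation rate.  The continuous diagonal damping matrix is `D(t) = diagonal (d t)`,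
`Y(t) = ∫_{t₀+h/2}^t D(s) ds = diagonal (∫_{t₀+h/2}^t d s)`, and `e^{Y(t)}` is the matrix
exponential of the diagonal matrix `Y(t)`, i.e. `diagonal (fun k => exp (Y t k))`.
Under the energy constraint `H(e^{Y(t)} y) = e^{φ(t)} H(y)` (at `t = t₀` and `t = t₀+h`,
with `φ(t) = ∫_{t₀+h/2}^t η(s) ds`), the collocation polynomial `v` with
`v(t₀) = e^{Y(t₀)} x₀` and `x₁ = e^{-Y(t₀+h)} v(t₀+h)` yields
`H(x₁) = e^{φ(t₀) - φ(t₀+h)} H(x₀)`. -/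
theorem exponential_energy_preserving_collocation_dissipation
    {N s : ℕ}
    (c : Fin s → ℝ) (hc : Function.Injective c)
    (ℓ : Fin s → ℝ → ℝ)
    (hℓ : ∀ i τ, ℓ i τ = ∏ j ∈ Finset.univ.erase i, (τ - c j) / (c i - c j))
    (b : Fin s → ℝ) (hb : ∀ i, b i = ∫ τ in (0:ℝ)..1, ℓ i τ)
    (hbne : ∀ i, b i ≠ 0)
    (S : Matrix (Fin N) (Fin N) ℝ) (hS : Sᵀ = -S)
    (H : (Fin N → ℝ) → ℝ) (gradH : (Fin N → ℝ) → (Fin N → ℝ))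
    (hH : ContDiff ℝ 1 H)
    (hgradH : ∀ y w, (fderiv ℝ H y) w = dotProduct (gradH y) w)
    (t₀ h : ℝ)
    (d : ℝ → (Fin N → ℝ)) (hd : Continuous d)
    (Y : ℝ → (Fin N → ℝ)) (hY : ∀ t, Y t = ∫ u in (t₀ + h/2)..t, d u)
    (η : ℝ → ℝ) (hη : Continuous η)
    (φ : ℝ → ℝ) (hφ : ∀ t, φ t = ∫ u in (t₀ + h/2)..t, η u)
    (hconstraint : ∀ t ∈ ({t₀, t₀ + h} : Set ℝ), ∀ y : Fin N → ℝ,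
      H ((Matrix.diagonal (fun k => Real.exp (Y t k))).mulVec y) = Real.exp (φ t) * H y)
    (x₀ x₁ : Fin N → ℝ)
    (v : ℝ → (Fin N → ℝ))
    (hv : ∀ k, ∃ p : Polynomial ℝ, p.natDegree ≤ s ∧ ∀ t, v t k = p.eval t)
    (hv0 : v t₀ = (Matrix.diagonal (fun k => Real.exp (Y t₀ k))).mulVec x₀)
    (hcoll : ∀ i, HasDerivAt v
      ((b i)⁻¹ • ∫ τ in (0:ℝ)..1, ℓ i τ • S.mulVec (gradH (v (t₀ + τ * h))))
      (t₀ + c i * h))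
    (hx1 : x₁ = (Matrix.diagonal (fun k => Real.exp (-(Y (t₀ + h) k)))).mulVec (v (t₀ + h))) :
    H x₁ = Real.exp (φ t₀ - φ (t₀ + h)) * H x₀ :=
  exponential_energy_preserving_collocation_dissipation_general c hc ℓ hℓ b S hS H gradH hH hgradH
    t₀ h Y φ hconstraint x₀ x₁ v hv hv0 hcoll hx1
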